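/- arXiv:1110.2053 — 4 statements merged into one kernel-verified Lean document; each statement's English description precedes it below -/
import Mathlib

section
/- Fix σ > 0 and let 𝒢σ : ℝ² → ℝ be the isotropic Gaussian quantization kernel 𝒢σ(x) = (2πσ²)⁻¹ exp(−‖x‖²/(2σ²)). Let g : ℝ² → ℝ² be an invertible affine map, g(x) = A x + b with A an invertible linear map and b ∈ ℝ². Then the following are equivalent: (i) quantization commutes with g, i.e. (𝒢σ ⋆ I)(g x) = (𝒢σ ⋆ (I ∘ g))(x) for every integrable I : ℝ² → ℝ and every x ∈ ℝ²; (ii) g is a Euclidean isometry of the plane, i.e. A is orthogonal (‖A v‖ = ‖v‖ for all v ∈ ℝ²). In particular, the only invertible affine nuisances that commute with Gaussian quantization are the isometries of the plane: rotations, translations, and reflections. -/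
/-!
Substituting `z = A y + b` turns `∫ 𝒢(x - y) I(A y + b) dy` into the integral of `I` against the
kernel `|det A|⁻¹ 𝒢(A⁻¹ ·)` centred at `A x + b`. Testing against all smooth compactly supported `I`
shows that quantization commutes with `g` exactly when `𝒢 = |det A|⁻¹ 𝒢 ∘ A⁻¹`. Evaluating at `0`
forces `|det A| = 1`, after which `𝒢(A v) = 𝒢(v)` means `‖A v‖ = ‖v‖`, since the Gaussian is a
strictly decreasing function of the norm. Conversely an isometry has `|det A| = 1` and preserves `𝒢`.
-/

open MeasureTheory

/-- The isotropic Gaussian quantization kernel on the plane at scale `σ`. -/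
noncomputable def gauss2 (σ : ℝ) (x : EuclideanSpace ℝ (Fin 2)) : ℝ :=
  (2 * Real.pi * σ ^ 2)⁻¹ * Real.exp (-‖x‖ ^ 2 / (2 * σ ^ 2))

def CommutesWithQuantization {E : Type*} [NormedAddCommGroup E] [NormedSpace ℝ E]
    [MeasurableSpace E] (μ : Measure E) (K : E → ℝ) (e : E ≃ₗ[ℝ] E) (b : E) : Prop :=
  ∀ I : E → ℝ, Integrable I μ →
    ∀ x, ∫ y, K (e x + b - y) * I y ∂μ = ∫ y, K (x - y) * I (e y + b) ∂μ

section NormedSpace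

variable {E : Type*} [NormedAddCommGroup E] [NormedSpace ℝ E] [FiniteDimensional ℝ E]

/-- An isometry maps the unit ball onto itself, and the ball has positive finite Haar measure. -/
theorem LinearIsometryEquiv.abs_det_eq_one (e : E ≃ₗᵢ[ℝ] E) :
    |LinearMap.det (e.toLinearEquiv : E →ₗ[ℝ] E)| = 1 := by
  borelize E
  have hball := Measure.addHaar_image_linearMap Measure.addHaar (e.toLinearEquiv : E →ₗ[ℝ] E)
    (Metric.ball 0 1)
  rw [show (e.toLinearEquiv : E →ₗ[ℝ] E) '' Metric.ball 0 1 = Metric.ball 0 1 by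
    simp [e.image_ball 0 1]] at hball
  exact ENNReal.ofReal_eq_one.mp <| (ENNReal.mul_eq_right
    (Metric.measure_ball_pos _ (0 : E) one_pos).ne' measure_ball_lt_top.ne).mp hball.symm

theorem kernel_invariant_iff_norm_map {K : E → ℝ} (hK0 : K 0 ≠ 0)
    (hK : ∀ x y, K x = K y ↔ ‖x‖ = ‖y‖) (e : E ≃ₗ[ℝ] E) :
    (∀ w, K w = |LinearMap.det (e : E →ₗ[ℝ] E)|⁻¹ * K (e.symm w)) ↔ ∀ v, ‖e v‖ = ‖v‖ := by
  constructor
  · intro H v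
    have hdet : |LinearMap.det (e : E →ₗ[ℝ] E)|⁻¹ = 1 := by
      simpa [hK0] using H 0
    simpa [hdet, hK] using H (e v)
  · intro he w
    rw [LinearIsometryEquiv.abs_det_eq_one ⟨e, he⟩, inv_one, one_mul, hK, ← he (e.symm w),
      e.apply_symm_apply]

variable [MeasurableSpace E] [BorelSpace E] (μ : Measure E) [μ.IsAddHaarMeasure]

theorem integral_comp_linearEquiv_add (e : E ≃ₗ[ℝ] E) (b : E) (g : E → ℝ) :
    ∫ y, g (e y + b) ∂μ = |LinearMap.det (e : E →ₗ[ℝ] E)|⁻¹ * ∫ z, g z ∂μ := by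
  have hdet : LinearMap.det (e : E →ₗ[ℝ] E) ≠ 0 := e.isUnit_det'.ne_zero
  let m : E ≃ᵐ E := e.toContinuousLinearEquiv.toHomeomorph.toMeasurableEquiv
  have hmap : μ.map m = ENNReal.ofReal |(LinearMap.det (e : E →ₗ[ℝ] E))⁻¹| • μ :=
    Measure.map_linearMap_addHaar_eq_smul_addHaar μ hdet
  calc ∫ y, g (e y + b) ∂μ = ∫ z, g (z + b) ∂(μ.map m) :=
        (integral_map_equiv m (fun z => g (z + b))).symm
    _ = |LinearMap.det (e : E →ₗ[ℝ] E)|⁻¹ * ∫ z, g z ∂μ := by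
      rw [hmap, integral_smul_measure, integral_add_right_eq_self,
        ENNReal.toReal_ofReal (abs_nonneg _), abs_inv, smul_eq_mul]

theorem eq_of_forall_integral_mul_eq {k₁ k₂ : E → ℝ} (h₁ : Continuous k₁) (h₂ : Continuous k₂)
    (h : ∀ I, Integrable I μ → ∫ z, k₁ z * I z ∂μ = ∫ z, k₂ z * I z ∂μ) : k₁ = k₂ := by
  refine (h₁.ae_eq_iff_eq μ h₂).mp (ae_eq_of_integral_contDiff_smul_eq h₁.locallyIntegrable
    h₂.locallyIntegrable fun g hg hgc => ?_)
  simp only [smul_eq_mul, mul_comm (g _)]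
  exact h g (hg.continuous.integrable_of_hasCompactSupport hgc)

theorem integral_kernel_mul_comp_affine (K I : E → ℝ) (e : E ≃ₗ[ℝ] E) (b x : E) :
    ∫ y, K (x - y) * I (e y + b) ∂μ =
      |LinearMap.det (e : E →ₗ[ℝ] E)|⁻¹ * ∫ z, K (e.symm (e x + b - z)) * I z ∂μ := by
  rw [← integral_comp_linearEquiv_add μ e b]
  congr 1 with y
  rw [add_sub_add_right_eq_sub, ← map_sub, e.symm_apply_apply]

theorem commutesWithQuantization_iff {K : E → ℝ} (hK : Continuous K) (e : E ≃ₗ[ℝ] E) (b : E) :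
    CommutesWithQuantization μ K e b ↔
      ∀ w, K w = |LinearMap.det (e : E →ₗ[ℝ] E)|⁻¹ * K (e.symm w) := by
  simp_rw [CommutesWithQuantization, integral_kernel_mul_comp_affine μ, ← integral_const_mul,
    ← mul_assoc]
  constructor
  · intro H w
    have hker := eq_of_forall_integral_mul_eq μ (k₁ := fun z => K (b - z))
      (k₂ := fun z => |LinearMap.det (e : E →ₗ[ℝ] E)|⁻¹ * K (e.symm (b - z))) (by fun_prop)
      (continuous_const.mul (hK.comp <| e.symm.toLinearMap.continuous_of_finiteDimensional.comp
        (continuous_sub_left b))) fun I hI => by simpa using H I hI 0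
    simpa using congrFun hker (b - w)
  · intro hinv I hI x
    simp_rw [← hinv]

end NormedSpace

theorem continuous_gauss2 (σ : ℝ) : Continuous (gauss2 σ) := by
  unfold gauss2
  fun_prop

theorem gauss2_eq_gauss2_iff {σ : ℝ} (hσ : σ ≠ 0) (x y : EuclideanSpace ℝ (Fin 2)) :
    gauss2 σ x = gauss2 σ y ↔ ‖x‖ = ‖y‖ := by
  simp [gauss2, hσ]

theorem gauss2_zero_ne_zero {σ : ℝ} (hσ : σ ≠ 0) : gauss2 σ 0 ≠ 0 := by
  simp [gauss2, hσ]

/-- An invertible affine map `x ↦ A x + b` commutes with Gaussian quantization on every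
integrable image if and only if it is a Euclidean isometry of the plane. -/
theorem stmt_3 (σ : ℝ) (hσ : 0 < σ)
    (A : EuclideanSpace ℝ (Fin 2) →ₗ[ℝ] EuclideanSpace ℝ (Fin 2))
    (hA : Function.Bijective ⇑A) (b : EuclideanSpace ℝ (Fin 2)) :
    (∀ I : EuclideanSpace ℝ (Fin 2) → ℝ, Integrable I →
        ∀ x, (∫ y, gauss2 σ (A x + b - y) * I y) = ∫ y, gauss2 σ (x - y) * I (A y + b)) ↔
      ∀ v, ‖A v‖ = ‖v‖ :=
  (commutesWithQuantization_iff volume (continuous_gauss2 σ) (.ofBijective A hA) b).trans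
    (kernel_invariant_iff_norm_map (gauss2_zero_ne_zero hσ.ne') (gauss2_eq_gauss2_iff hσ.ne') _)
end

section
/- Fix σ > 0 and let 𝒢σ : ℝ² → ℝ be the isotropic Gaussian quantization kernel 𝒢σ(x) = (2πσ²)⁻¹ exp(−‖x‖²/(2σ²)). For every scale factor s > 0 with s ≠ 1, the scaling map g(x) = s x does not commute with quantization: there exist an integrable function I : ℝ² → ℝ and a point x ∈ ℝ² such that (𝒢σ ⋆ I)(s x) ≠ (𝒢σ ⋆ (I ∘ g))(x). Hence scale should not be canonized in the presence of quantization. -/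
/-!
Take the image `I = 𝒢σ` itself and the point `x = 0`. As `𝒢σ` is even, both sides are then
Gaussian integrals `∫ 𝒢σ(y) 𝒢σ(a y) dy = (2πσ²(1 + a²))⁻¹`, with `a = 1` for quantizing then
scaling and `a = s` for scaling then quantizing; they agree only when `s² = 1`.
-/

open MeasureTheory

theorem integrable_rexp_neg_mul_sq_norm {V : Type*} [NormedAddCommGroup V]
    [InnerProductSpace ℝ V] [FiniteDimensional ℝ V] [MeasurableSpace V] [BorelSpace V]
    {b : ℝ} (hb : 0 < b) : Integrable (fun v : V ↦ Real.exp (-b * ‖v‖ ^ 2)) :=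
  .of_integral_ne_zero <| by rw [GaussianFourier.integral_rexp_neg_mul_sq_norm hb]; positivity

namespace gauss2

variable {σ : ℝ}

theorem eq_mul_rexp (σ : ℝ) (x : EuclideanSpace ℝ (Fin 2)) :
    gauss2 σ x = (2 * Real.pi * σ ^ 2)⁻¹ * Real.exp (-(2 * σ ^ 2)⁻¹ * ‖x‖ ^ 2) := by
  rw [gauss2, neg_div, div_eq_inv_mul, neg_mul]

theorem apply_neg (σ : ℝ) (x : EuclideanSpace ℝ (Fin 2)) : gauss2 σ (-x) = gauss2 σ x := by
  rw [gauss2, gauss2, norm_neg]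

theorem integrable (hσ : σ ≠ 0) : Integrable (gauss2 σ) := by
  rw [show gauss2 σ = _ from funext (eq_mul_rexp σ)]
  exact (integrable_rexp_neg_mul_sq_norm (V := EuclideanSpace ℝ (Fin 2))
      (b := (2 * σ ^ 2)⁻¹) (by positivity)).const_mul (2 * Real.pi * σ ^ 2)⁻¹

theorem mul_smul_eq_mul_rexp (σ s : ℝ) (y : EuclideanSpace ℝ (Fin 2)) :
    gauss2 σ y * gauss2 σ (s • y) =
      (2 * Real.pi * σ ^ 2)⁻¹ ^ 2 * Real.exp (-((1 + s ^ 2) / (2 * σ ^ 2)) * ‖y‖ ^ 2) := by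
  rw [eq_mul_rexp, eq_mul_rexp, mul_mul_mul_comm, ← Real.exp_add, norm_smul, Real.norm_eq_abs,
    mul_pow, sq_abs]
  ring_nf

theorem integral_mul_smul (hσ : σ ≠ 0) (s : ℝ) :
    ∫ y, gauss2 σ y * gauss2 σ (s • y) = (2 * Real.pi * σ ^ 2 * (1 + s ^ 2))⁻¹ := by
  simp_rw [mul_smul_eq_mul_rexp, integral_const_mul]
  rw [GaussianFourier.integral_rexp_neg_mul_sq_norm (by positivity), finrank_euclideanSpace_fin,
    Nat.cast_ofNat, div_self two_ne_zero, Real.rpow_one]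
  field_simp

end gauss2

/-- For every scale factor `s > 0`, `s ≠ 1`, the scaling map does not commute with
Gaussian quantization: there are an integrable image and a point where quantizing
then scaling differs from scaling then quantizing. -/
theorem stmt_5 (σ : ℝ) (hσ : 0 < σ) (s : ℝ) (hs : 0 < s) (hs1 : s ≠ 1) :
    ∃ I : EuclideanSpace ℝ (Fin 2) → ℝ, Integrable I ∧
      ∃ x : EuclideanSpace ℝ (Fin 2),
        (∫ y, gauss2 σ (s • x - y) * I y) ≠ ∫ y, gauss2 σ (x - y) * I (s • y) := by
  refine ⟨gauss2 σ, gauss2.integrable hσ.ne', 0, ?_⟩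
  have quantize_then_scale := gauss2.integral_mul_smul hσ.ne' 1
  simp only [one_smul, one_pow] at quantize_then_scale
  simp only [smul_zero, zero_sub, gauss2.apply_neg, quantize_then_scale,
    gauss2.integral_mul_smul hσ.ne' s]
  intro h
  field_simp at h
  exact hs1 (by nlinarith)
end

section
/- Let (Y, μ) be a measure space and let p₁, p₀ : Y → ℝ be measurable probability densities with respect to μ (nonnegative with ∫ pᵢ dμ = 1) that are strictly positive μ-almost everywhere. For a measurable discriminant F : Y → ℝ define the exponential risk R(F) = ½ ∫ e^{−F} p₁ dμ + ½ ∫ e^{F} p₀ dμ, corresponding to equiprobable classes. Then R(F) ≥ ∫ √(p₁ p₀) dμ for every F, and the log-likelihood-ratio discriminant F*(y) = ½ log(p₁(y)/p₀(y)) attains equality: R(F*) = ∫ √(p₁ p₀) dμ. Hence the minimal exponential risk equals the Bhattacharyya coefficient of the two class-conditional densities. -/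
/-!
Pointwise, `√(p₁ p₀) = √((e^{-F} p₁)(e^{F} p₀)) ≤ (e^{-F} p₁ + e^{F} p₀) / 2` by AM–GM, for every
value of `F`; integrating gives the lower bound. Equality in AM–GM means `e^{-F} p₁ = e^{F} p₀`,
i.e. `F = ½ log (p₁ / p₀)`, and for this `F` both risk terms equal `√(p₁ p₀)` wherever the
densities are positive.
-/

open MeasureTheory Real
open scoped ENNReal

namespace Real

lemma sqrt_mul_le_half_add {x y : ℝ} (hx : 0 ≤ x) (hy : 0 ≤ y) : √(x * y) ≤ (x + y) / 2 :=
  sqrt_le_iff.mpr ⟨by positivity, by nlinarith [sq_nonneg (x - y)]⟩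

lemma sqrt_mul_le_half_exp_neg_mul_add_exp_mul (t : ℝ) {a b : ℝ} (ha : 0 ≤ a) (hb : 0 ≤ b) :
    √(a * b) ≤ (exp (-t) * a + exp t * b) / 2 := by
  have hab : a * b = (exp (-t) * a) * (exp t * b) := by
    rw [mul_mul_mul_comm, ← exp_add, neg_add_cancel, exp_zero, one_mul]
  rw [hab]
  exact sqrt_mul_le_half_add (by positivity) (by positivity)

lemma exp_half_mul_log {x : ℝ} (hx : 0 < x) : exp (1 / 2 * log x) = √x := by
  rw [one_div_mul_eq_div, exp_half, exp_log hx]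

lemma sqrt_div_mul_self {a : ℝ} (ha : 0 ≤ a) (b : ℝ) : √(a / b) * b = √(a * b) := by
  rw [sqrt_div ha, sqrt_mul ha, div_mul_eq_mul_div, mul_div_assoc, div_sqrt]

end Real

section ExponentialRisk

variable {Y : Type*} [MeasurableSpace Y] (μ : Measure Y)

noncomputable def expRisk (p₁ p₀ F : Y → ℝ) : ℝ≥0∞ :=
  (1 / 2) * (∫⁻ y, ENNReal.ofReal (exp (-F y) * p₁ y) ∂μ) +
    (1 / 2) * ∫⁻ y, ENNReal.ofReal (exp (F y) * p₀ y) ∂μ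

noncomputable def bhattacharyya (p₁ p₀ : Y → ℝ) : ℝ≥0∞ :=
  ∫⁻ y, ENNReal.ofReal (√(p₁ y * p₀ y)) ∂μ

noncomputable def halfLogLikelihoodRatio (p₁ p₀ : Y → ℝ) (y : Y) : ℝ :=
  1 / 2 * log (p₁ y / p₀ y)

variable {μ} {p₁ p₀ : Y → ℝ}

lemma ENNReal.ofReal_sqrt_mul_le_half_exp_neg_mul_add_exp_mul (t : ℝ) {a b : ℝ}
    (ha : 0 ≤ a) (hb : 0 ≤ b) :
    ENNReal.ofReal √(a * b) ≤
      (1 / 2) * ENNReal.ofReal (exp (-t) * a) + (1 / 2) * ENNReal.ofReal (exp t * b) := by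
  calc ENNReal.ofReal √(a * b)
      ≤ ENNReal.ofReal ((exp (-t) * a + exp t * b) / 2) :=
        ENNReal.ofReal_le_ofReal (sqrt_mul_le_half_exp_neg_mul_add_exp_mul t ha hb)
    _ = (1 / 2) * ENNReal.ofReal (exp (-t) * a) + (1 / 2) * ENNReal.ofReal (exp t * b) := by
        rw [ENNReal.ofReal_div_of_pos two_pos, ENNReal.ofReal_add (by positivity) (by positivity),
          ENNReal.ofReal_ofNat, ENNReal.div_eq_inv_mul, one_div, mul_add]

lemma bhattacharyya_le_expRisk {F : Y → ℝ} (hF : AEMeasurable F μ) (h₁m : AEMeasurable p₁ μ)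
    (h₁ : ∀ᵐ y ∂μ, 0 ≤ p₁ y) (h₀ : ∀ᵐ y ∂μ, 0 ≤ p₀ y) :
    bhattacharyya μ p₁ p₀ ≤ expRisk μ p₁ p₀ F := by
  have h₁F : AEMeasurable (fun y ↦ (1 / 2) * ENNReal.ofReal (exp (-F y) * p₁ y)) μ := by
    fun_prop
  calc bhattacharyya μ p₁ p₀
      ≤ ∫⁻ y, (1 / 2) * ENNReal.ofReal (exp (-F y) * p₁ y) +
          (1 / 2) * ENNReal.ofReal (exp (F y) * p₀ y) ∂μ :=
        lintegral_mono_ae <| (h₁.and h₀).mono fun y ⟨h₁y, h₀y⟩ ↦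
          ENNReal.ofReal_sqrt_mul_le_half_exp_neg_mul_add_exp_mul (F y) h₁y h₀y
    _ = expRisk μ p₁ p₀ F := by
        rw [lintegral_add_left' h₁F, lintegral_const_mul' _ _ (by simp),
          lintegral_const_mul' _ _ (by simp), expRisk]

lemma expRisk_halfLogLikelihoodRatio (h₁ : ∀ᵐ y ∂μ, 0 < p₁ y) (h₀ : ∀ᵐ y ∂μ, 0 < p₀ y) :
    expRisk μ p₁ p₀ (halfLogLikelihoodRatio p₁ p₀) = bhattacharyya μ p₁ p₀ := by
  have term₁ : ∀ᵐ y ∂μ, ENNReal.ofReal (exp (-halfLogLikelihoodRatio p₁ p₀ y) * p₁ y) =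
      ENNReal.ofReal √(p₁ y * p₀ y) := (h₁.and h₀).mono fun y ⟨h₁y, h₀y⟩ ↦ by
    rw [halfLogLikelihoodRatio, ← mul_neg, ← log_inv, inv_div,
      exp_half_mul_log (div_pos h₀y h₁y), sqrt_div_mul_self h₀y.le, mul_comm]
  have term₀ : ∀ᵐ y ∂μ, ENNReal.ofReal (exp (halfLogLikelihoodRatio p₁ p₀ y) * p₀ y) =
      ENNReal.ofReal √(p₁ y * p₀ y) := (h₁.and h₀).mono fun y ⟨h₁y, h₀y⟩ ↦ by
    rw [halfLogLikelihoodRatio, exp_half_mul_log (div_pos h₁y h₀y), sqrt_div_mul_self h₁y.le]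
  rw [expRisk, lintegral_congr_ae term₁, lintegral_congr_ae term₀, ← add_mul, one_div,
    ENNReal.inv_two_add_inv_two, one_mul, bhattacharyya]

end ExponentialRisk

theorem stmt_9_general {Y : Type*} [MeasurableSpace Y] (μ : Measure Y)
    (p₁ p₀ : Y → ℝ) (h₁m : Measurable p₁)
    (h₁pos : ∀ᵐ y ∂μ, 0 < p₁ y) (h₀pos : ∀ᵐ y ∂μ, 0 < p₀ y) :
    (∀ F : Y → ℝ, Measurable F →
        (∫⁻ y, ENNReal.ofReal (Real.sqrt (p₁ y * p₀ y)) ∂μ) ≤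
          (1 / 2) * (∫⁻ y, ENNReal.ofReal (Real.exp (-F y) * p₁ y) ∂μ) +
            (1 / 2) * ∫⁻ y, ENNReal.ofReal (Real.exp (F y) * p₀ y) ∂μ) ∧
    ((1 / 2) * (∫⁻ y, ENNReal.ofReal
          (Real.exp (-((1 / 2) * Real.log (p₁ y / p₀ y))) * p₁ y) ∂μ) +
        (1 / 2) * (∫⁻ y, ENNReal.ofReal
          (Real.exp ((1 / 2) * Real.log (p₁ y / p₀ y)) * p₀ y) ∂μ) =
      ∫⁻ y, ENNReal.ofReal (Real.sqrt (p₁ y * p₀ y)) ∂μ) :=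
  ⟨fun _ hF ↦ bhattacharyya_le_expRisk hF.aemeasurable h₁m.aemeasurable
      (h₁pos.mono fun _ ↦ le_of_lt) (h₀pos.mono fun _ ↦ le_of_lt),
    expRisk_halfLogLikelihoodRatio h₁pos h₀pos⟩

/-- For equiprobable classes with class-conditional densities `p₁, p₀`, every
measurable discriminant has exponential risk at least the Bhattacharyya coefficient,
and the log-likelihood-ratio discriminant attains it. -/
theorem stmt_9 {Y : Type*} [MeasurableSpace Y] (μ : Measure Y)
    (p₁ p₀ : Y → ℝ) (h₁m : Measurable p₁) (h₀m : Measurable p₀)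
    (h₁nn : ∀ y, 0 ≤ p₁ y) (h₀nn : ∀ y, 0 ≤ p₀ y)
    (h₁pos : ∀ᵐ y ∂μ, 0 < p₁ y) (h₀pos : ∀ᵐ y ∂μ, 0 < p₀ y)
    (h₁int : ∫⁻ y, ENNReal.ofReal (p₁ y) ∂μ = 1)
    (h₀int : ∫⁻ y, ENNReal.ofReal (p₀ y) ∂μ = 1) :
    (∀ F : Y → ℝ, Measurable F →
        (∫⁻ y, ENNReal.ofReal (Real.sqrt (p₁ y * p₀ y)) ∂μ) ≤
          (1 / 2) * (∫⁻ y, ENNReal.ofReal (Real.exp (-F y) * p₁ y) ∂μ) +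
            (1 / 2) * ∫⁻ y, ENNReal.ofReal (Real.exp (F y) * p₀ y) ∂μ) ∧
    ((1 / 2) * (∫⁻ y, ENNReal.ofReal
          (Real.exp (-((1 / 2) * Real.log (p₁ y / p₀ y))) * p₁ y) ∂μ) +
        (1 / 2) * (∫⁻ y, ENNReal.ofReal
          (Real.exp ((1 / 2) * Real.log (p₁ y / p₀ y)) * p₀ y) ∂μ) =
      ∫⁻ y, ENNReal.ofReal (Real.sqrt (p₁ y * p₀ y)) ∂μ) :=
  stmt_9_general μ p₁ p₀ h₁m h₁pos h₀pos
end

section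
/- Under the Lambert–ambient image-formation model with one ambient and one distant point light source, the image of a scene restricted to four pixels is I = A X ∈ ℝ⁴, where X ∈ ℝ⁴ collects the unknown ambient intensity and light vector, and A is a 4 × 4 matrix determined by the scene's albedo and surface normals. Let 𝒜 be any set of 4 × 4 real matrices containing at least one invertible matrix (the admissible scene matrices), and let φ : ℝ⁴ → Y be a statistic that is illumination-invariant for every scene in 𝒜, i.e. φ(A X₁) = φ(A X₂) for all A ∈ 𝒜 and all X₁, X₂ ∈ ℝ⁴. Then φ is constant on all of ℝ⁴; in particular φ(A X) = φ(A′ X′) for all scenes A, A′ ∈ 𝒜 and all illuminations X, X′, so φ is non-discriminative. Hence there exists no discriminative single-view illumination invariant. -/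
/-- There is no discriminative single-view illumination invariant: a statistic that is
illumination-invariant for every admissible scene matrix (at least one of which is
invertible) must be constant, hence non-discriminative. -/
theorem stmt_11 {Y : Type*} (𝒜 : Set (Matrix (Fin 4) (Fin 4) ℝ))
    (hinv : ∃ A ∈ 𝒜, IsUnit A)
    (φ : (Fin 4 → ℝ) → Y)
    (hφ : ∀ A ∈ 𝒜, ∀ X₁ X₂ : Fin 4 → ℝ, φ (A.mulVec X₁) = φ (A.mulVec X₂)) :
    (∀ v w : Fin 4 → ℝ, φ v = φ w) ∧
      ∀ A ∈ 𝒜, ∀ A' ∈ 𝒜, ∀ X X' : Fin 4 → ℝ, φ (A.mulVec X) = φ (A'.mulVec X') := by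
  obtain ⟨A, hA, hU⟩ := hinv
  have hconst : ∀ v w : Fin 4 → ℝ, φ v = φ w :=
    (Matrix.mulVec_surjective_iff_isUnit.mpr hU).forall₂.mpr (hφ A hA)
  exact ⟨hconst, fun _ _ _ _ _ _ => hconst _ _⟩
end
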